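/- Let L be the Schrödinger-Virasoro algebra and D an element of the 6-parameter family of derivations with parameters satisfying α† = −α, β† = −β, γ† = −γ (so that D(L) ⊆ Im(1−τ)). Then (1 + ξ + ξ²)·(1 ⊗ D)·D = 0, and consequently (L, [·,·], D) is a Lie bialgebra with cobracket Δ = D. -/

import Mathlib

open TensorProduct

/-- Index set for the basis of the Schrödinger–Virasoro algebra:
`Sum.inl n ↔ L_n`, `Sum.inr (Sum.inl n) ↔ Y_{n+1/2}`, `Sum.inr (Sum.inr n) ↔ M_n`. -/
abbrev SVIx : Type := ℤ ⊕ ℤ ⊕ ℤ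

variable (F : Type) [Field F] [CharZero F]

/-- Underlying space of the Schrödinger–Virasoro algebra: the free `F`-module on `SVIx`. -/
abbrev SVL := SVIx →₀ F

noncomputable def Lb (n : ℤ) : SVL F := Finsupp.single (Sum.inl n) 1
noncomputable def Yb (n : ℤ) : SVL F := Finsupp.single (Sum.inr (Sum.inl n)) 1
noncomputable def Mb (n : ℤ) : SVL F := Finsupp.single (Sum.inr (Sum.inr n)) 1

/-- The bracket of basis vectors.  Here `Yb n` stands for `Y_{n+1/2}`, so
`[L_m, Y_{n+1/2}] = ((n+1/2) - m/2) Y_{m+n+1/2}` and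
`[Y_{a+1/2}, Y_{b+1/2}] = (b-a) M_{a+b+1}`; all other brackets vanish. -/
noncomputable def brIx : SVIx → SVIx → SVL F
  | Sum.inl m, Sum.inl n => ((n - m : ℤ) : F) • Lb F (m + n)
  | Sum.inl m, Sum.inr (Sum.inl n) => (((2*n + 1 - m : ℤ) : F) / 2) • Yb F (m + n)
  | Sum.inl m, Sum.inr (Sum.inr n) => ((n : ℤ) : F) • Mb F (m + n)
  | Sum.inr (Sum.inl n), Sum.inl m => -((((2*n + 1 - m : ℤ) : F) / 2) • Yb F (m + n))
  | Sum.inr (Sum.inl a), Sum.inr (Sum.inl b) => ((b - a : ℤ) : F) • Mb F (a + b + 1)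
  | Sum.inr (Sum.inr n), Sum.inl m => -(((n : ℤ) : F) • Mb F (m + n))
  | _, _ => 0

/-- The bracket of the Schrödinger–Virasoro algebra: the bilinear extension of `brIx`. -/
noncomputable def bk : SVL F →ₗ[F] SVL F →ₗ[F] SVL F :=
  Finsupp.lsum F fun i => LinearMap.toSpanSingleton F (SVL F →ₗ[F] SVL F)
    (Finsupp.lsum F fun j => LinearMap.toSpanSingleton F (SVL F) (brIx F i j))

abbrev VV := SVL F ⊗[F] SVL F

noncomputable instance : AddCommGroup (VV F) := inferInstance

noncomputable instance : Zero (VV F) :=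
  (inferInstance : AddCommMonoid (VV F)).toAddMonoid.toZero

/-- The adjoint diagonal action of `L` on `L ⊗ L`, as a bilinear map:
`x · (a ⊗ b) = [x,a] ⊗ b + a ⊗ [x,b]`. -/
noncomputable def adVb : SVL F →ₗ[F] VV F →ₗ[F] VV F :=
  ((LinearMap.rTensorHom (SVL F) : (SVL F →ₗ[F] SVL F) →ₗ[F] (VV F →ₗ[F] VV F)) ∘ₗ bk F)
    + ((LinearMap.lTensorHom (SVL F) : (SVL F →ₗ[F] SVL F) →ₗ[F] (VV F →ₗ[F] VV F)) ∘ₗ bk F)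

/-- The twist map `τ(x ⊗ y) = y ⊗ x`. -/
noncomputable def tau : VV F →ₗ[F] VV F := (TensorProduct.comm F (SVL F) (SVL F)).toLinearMap

/-- The map `1 - τ`. -/
noncomputable def oneMinusTau : VV F →ₗ[F] VV F where
  toFun v := v - tau F v
  map_add' x y := by
    simp only [map_add]; exact sub_add_sub_comm x (tau F x) y (tau F y) ▸ rfl
  map_smul' c x := by simp only [map_smul, RingHom.id_apply, smul_sub]

/-- `Im (1 - τ) ⊂ L ⊗ L`. -/
noncomputable def skewIm : Submodule F (VV F) := LinearMap.range (oneMinusTau F)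
abbrev T3 := SVL F ⊗[F] (SVL F ⊗[F] SVL F)

/-- The bracket as a linear map on `L ⊗ L`. -/
noncomputable def lb : VV F →ₗ[F] SVL F := TensorProduct.lift (bk F)

/-- The linear map with `(a ⊗ b) ⊗ (a' ⊗ b') ↦ [a,a'] ⊗ b ⊗ b' + a ⊗ [b,a'] ⊗ b' + a ⊗ a' ⊗ [b,b']`,
so that the classical Yang–Baxter expression is `c(r) = cmap (r ⊗ r)`. -/
noncomputable def cmap : (VV F ⊗[F] VV F) →ₗ[F] T3 F :=
  ((TensorProduct.map (lb F) (LinearMap.id : VV F →ₗ[F] VV F)) ∘ₗ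
      (TensorProduct.tensorTensorTensorComm F (SVL F) (SVL F) (SVL F) (SVL F)).toLinearMap)
  + ((LinearMap.lTensor (SVL F)
        ((TensorProduct.map (lb F) (LinearMap.id : SVL F →ₗ[F] SVL F)) ∘ₗ
          (TensorProduct.assoc F (SVL F) (SVL F) (SVL F)).symm.toLinearMap)) ∘ₗ
      (TensorProduct.assoc F (SVL F) (SVL F) (VV F)).toLinearMap)
  + (((TensorProduct.assoc F (SVL F) (SVL F) (SVL F)).toLinearMap) ∘ₗ
      (TensorProduct.map (LinearMap.id : VV F →ₗ[F] VV F) (lb F)) ∘ₗ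
      (TensorProduct.tensorTensorTensorComm F (SVL F) (SVL F) (SVL F) (SVL F)).toLinearMap)

/-- The classical Yang–Baxter expression `c(r)`. -/
noncomputable def cyb (r : VV F) : T3 F := cmap F (r ⊗ₜ[F] r)

/-- The adjoint diagonal action of `x ∈ L` on `L ⊗ L ⊗ L`. -/
noncomputable def adT3 (x : SVL F) : T3 F →ₗ[F] T3 F :=
  LinearMap.rTensor (VV F) (bk F x) + LinearMap.lTensor (SVL F) (adVb F x)

/-- The cyclic map `ξ : x₁ ⊗ x₂ ⊗ x₃ ↦ x₂ ⊗ x₃ ⊗ x₁`. -/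
noncomputable def xi : T3 F →ₗ[F] T3 F :=
  (TensorProduct.assoc F (SVL F) (SVL F) (SVL F)).toLinearMap ∘ₗ
    (TensorProduct.comm F (SVL F) (VV F)).toLinearMap

/-- `1 + ξ + ξ²` applied to an element of `L ⊗ L ⊗ L`. -/
noncomputable def cyclicSum (t : T3 F) : T3 F := t + xi F t + xi F (xi F t)

noncomputable instance : Zero (T3 F) :=
  (inferInstance : AddCommMonoid (T3 F)).toAddMonoid.toZero

/-- Values on basis elements of the special derivations `D` with parameters
`(α, α†, β, β†, γ, γ†)`:  `D(L_n) = (nα+γ) M₀⊗M_n + (nα†+γ†) M_n⊗M₀`,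
`D(Y_{n+1/2}) = β M₀⊗Y_{n+1/2} + β† Y_{n+1/2}⊗M₀`, `D(M_n) = 2(β M₀⊗M_n + β† M_n⊗M₀)`. -/
noncomputable def dval (a a' b b' c c' : F) : SVIx → VV F
  | Sum.inl n => (((n : ℤ) : F) * a + c) • (Mb F 0 ⊗ₜ[F] Mb F n)
      + (((n : ℤ) : F) * a' + c') • (Mb F n ⊗ₜ[F] Mb F 0)
  | Sum.inr (Sum.inl n) => b • (Mb F 0 ⊗ₜ[F] Yb F n) + b' • (Yb F n ⊗ₜ[F] Mb F 0)
  | Sum.inr (Sum.inr n) => (2 * b) • (Mb F 0 ⊗ₜ[F] Mb F n) + (2 * b') • (Mb F n ⊗ₜ[F] Mb F 0)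

/-- The special derivation with parameters `(α, α†, β, β†, γ, γ†)`. -/
noncomputable def Dmap (a a' b b' c c' : F) : SVL F →ₗ[F] VV F :=
  Finsupp.lsum F fun i => LinearMap.toSpanSingleton F (VV F) (dval F a a' b b' c c' i)

/-- `D` is a derivation from `L` to the `L`-module `L ⊗ L`. -/
def IsDer (D : SVL F →ₗ[F] VV F) : Prop :=
  ∀ x y : SVL F, D (bk F x y) = adVb F x (D y) - adVb F y (D x)

/-!
The element `M₀` is central, and `D = D_{α,-α,β,-β,γ,-γ}` factors as `D x = M₀ ⊗ d x - d x ⊗ M₀`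
through the derivation `d` of `L` with `d L_n = (nα+γ) M_n`, `d Y_{n+1/2} = β Y_{n+1/2}`,
`d M_n = 2β M_n`.  A map `wedgeLeft z d : x ↦ (1 - τ)(z ⊗ d x)` lands in `Im (1 - τ)`; it is a
derivation into `L ⊗ L` as soon as `z` is central and the bracket is antisymmetric; and since `z`
is an eigenvector of `d` it kills `z`, so `(1 ⊗ D) D x = z ⊗ (z ⊗ y - y ⊗ z)` with `y = d (d x)`,
whose cyclic sum vanishes.
-/

section
variable {K : Type} [Field K]

lemma single_inl_one (n : ℤ) : Finsupp.single (Sum.inl n) (1 : K) = Lb K n := rfl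
lemma single_inr_inl_one (n : ℤ) : Finsupp.single (Sum.inr (Sum.inl n)) (1 : K) = Yb K n := rfl
lemma single_inr_inr_one (n : ℤ) : Finsupp.single (Sum.inr (Sum.inr n)) (1 : K) = Mb K n := rfl

lemma bk_single (i j : SVIx) :
    bk K (Finsupp.single i 1) (Finsupp.single j 1) = brIx K i j := by
  simp [bk]

lemma bk_Lb_Lb (m n : ℤ) : bk K (Lb K m) (Lb K n) = ((n - m : ℤ) : K) • Lb K (m + n) :=
  bk_single _ _
lemma bk_Lb_Yb (m n : ℤ) :
    bk K (Lb K m) (Yb K n) = (((2 * n + 1 - m : ℤ) : K) / 2) • Yb K (m + n) :=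
  bk_single _ _
lemma bk_Lb_Mb (m n : ℤ) : bk K (Lb K m) (Mb K n) = (n : K) • Mb K (m + n) :=
  bk_single _ _
lemma bk_Yb_Lb (n m : ℤ) :
    bk K (Yb K n) (Lb K m) = -((((2 * n + 1 - m : ℤ) : K) / 2) • Yb K (m + n)) :=
  bk_single _ _
lemma bk_Yb_Yb (p q : ℤ) : bk K (Yb K p) (Yb K q) = ((q - p : ℤ) : K) • Mb K (p + q + 1) :=
  bk_single _ _
lemma bk_Yb_Mb (p n : ℤ) : bk K (Yb K p) (Mb K n) = 0 := bk_single _ _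
lemma bk_Mb_Lb (n m : ℤ) : bk K (Mb K n) (Lb K m) = -((n : K) • Mb K (n + m)) := by
  rw [add_comm]; exact bk_single _ _
lemma bk_Mb_Yb (n p : ℤ) : bk K (Mb K n) (Yb K p) = 0 := bk_single _ _
lemma bk_Mb_Mb (m n : ℤ) : bk K (Mb K m) (Mb K n) = 0 := bk_single _ _

lemma bk_swap (x y : SVL K) : bk K y x = -bk K x y := by
  have key : (bk K).flip + bk K = 0 := by
    ext i j
    rcases i with m | m | m <;> rcases j with n | n | n <;>
      simp [bk_single, brIx, Lb, Yb, Mb, add_comm]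
  rw [eq_neg_iff_add_eq_zero]
  exact LinearMap.congr_fun₂ key x y

lemma bk_Mb_zero_right (x : SVL K) : bk K x (Mb K 0) = 0 := by
  have key : (bk K).flip (Mb K 0) = 0 := by
    ext i
    rcases i with m | m | m <;> simp [bk_single, brIx, Mb]
  exact LinearMap.congr_fun key x

noncomputable def derVal (a b c : K) : SVIx → SVL K
  | Sum.inl n => ((n : K) * a + c) • Mb K n
  | Sum.inr (Sum.inl n) => b • Yb K n
  | Sum.inr (Sum.inr n) => (2 * b) • Mb K n

noncomputable def derMap (a b c : K) : SVL K →ₗ[K] SVL K :=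
  Finsupp.lsum K fun i => LinearMap.toSpanSingleton K (SVL K) (derVal a b c i)

lemma derMap_single (a b c : K) (i : SVIx) :
    derMap a b c (Finsupp.single i 1) = derVal a b c i := by
  simp [derMap]

lemma derMap_Lb (a b c : K) (n : ℤ) : derMap a b c (Lb K n) = ((n : K) * a + c) • Mb K n :=
  derMap_single a b c _
lemma derMap_Yb (a b c : K) (n : ℤ) : derMap a b c (Yb K n) = b • Yb K n :=
  derMap_single a b c _
lemma derMap_Mb (a b c : K) (n : ℤ) : derMap a b c (Mb K n) = (2 * b) • Mb K n :=
  derMap_single a b c _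

lemma derMap_bk (a b c : K) (x y : SVL K) :
    derMap a b c (bk K x y) = bk K (derMap a b c x) y + bk K x (derMap a b c y) := by
  have key : (bk K).compr₂ (derMap a b c) =
      (bk K).comp (derMap a b c) + (bk K).compl₂ (derMap a b c) := by
    ext i j : 4
    rcases i with m | m | m <;> rcases j with n | n | n <;>
      simp only [LinearMap.comp_apply, LinearMap.compr₂_apply, LinearMap.add_apply,
        LinearMap.compl₂_apply, Finsupp.lsingle_apply,
        single_inl_one, single_inr_inl_one, single_inr_inr_one,
        derMap_Lb, derMap_Yb, derMap_Mb, map_smul, map_neg, map_zero, LinearMap.smul_apply,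
        bk_Lb_Lb, bk_Lb_Yb, bk_Lb_Mb, bk_Yb_Lb, bk_Yb_Yb, bk_Yb_Mb, bk_Mb_Lb, bk_Mb_Yb, bk_Mb_Mb,
        Int.cast_add, Int.cast_sub, Int.cast_mul, Int.cast_one, Int.cast_ofNat] <;>
      module
  exact LinearMap.congr_fun₂ key x y

lemma adVb_tmul (x u v : SVL K) :
    adVb K x (u ⊗ₜ[K] v) = bk K x u ⊗ₜ[K] v + u ⊗ₜ[K] bk K x v := by
  simp [adVb]

lemma xi_tmul (x y z : SVL K) : xi K (x ⊗ₜ[K] (y ⊗ₜ[K] z)) = y ⊗ₜ[K] (z ⊗ₜ[K] x) := by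
  simp [xi]

lemma cyclicSum_tmul_tmul_sub (u v : SVL K) :
    cyclicSum K (u ⊗ₜ[K] (u ⊗ₜ[K] v - v ⊗ₜ[K] u)) = 0 := by
  simp only [cyclicSum, TensorProduct.tmul_sub, map_sub, xi_tmul]
  abel

noncomputable def wedgeLeft (z : SVL K) (d : SVL K →ₗ[K] SVL K) : SVL K →ₗ[K] VV K :=
  oneMinusTau K ∘ₗ TensorProduct.mk K (SVL K) (SVL K) z ∘ₗ d

lemma wedgeLeft_apply (z : SVL K) (d : SVL K →ₗ[K] SVL K) (x : SVL K) :
    wedgeLeft z d x = z ⊗ₜ[K] d x - d x ⊗ₜ[K] z :=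
  rfl

lemma wedgeLeft_mem_skewIm (z : SVL K) (d : SVL K →ₗ[K] SVL K) (x : SVL K) :
    wedgeLeft z d x ∈ skewIm K :=
  LinearMap.mem_range_self _ _

lemma isDer_wedgeLeft {z : SVL K} {d : SVL K →ₗ[K] SVL K} (hz : ∀ x, bk K x z = 0)
    (hd : ∀ x y, d (bk K x y) = bk K (d x) y + bk K x (d y)) : IsDer K (wedgeLeft z d) := by
  intro x y
  simp only [wedgeLeft_apply, map_sub, adVb_tmul, hz, hd, bk_swap y (d x), TensorProduct.tmul_add,
    TensorProduct.add_tmul, TensorProduct.tmul_neg, TensorProduct.neg_tmul,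
    TensorProduct.zero_tmul, TensorProduct.tmul_zero]
  abel

lemma cyclicSum_lTensor_wedgeLeft {z : SVL K} {d : SVL K →ₗ[K] SVL K} {μ : K}
    (hdz : d z = μ • z) (x : SVL K) :
    cyclicSum K (LinearMap.lTensor (SVL K) (wedgeLeft z d) (wedgeLeft z d x)) = 0 := by
  have hz : wedgeLeft z d z = 0 := by
    rw [wedgeLeft_apply, hdz, TensorProduct.tmul_smul, TensorProduct.smul_tmul', sub_self]
  have hD : LinearMap.lTensor (SVL K) (wedgeLeft z d) (wedgeLeft z d x) =
      z ⊗ₜ[K] (z ⊗ₜ[K] d (d x) - d (d x) ⊗ₜ[K] z) := by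
    rw [wedgeLeft_apply, map_sub, LinearMap.lTensor_tmul, LinearMap.lTensor_tmul, hz,
      TensorProduct.tmul_zero, sub_zero (G := T3 K), wedgeLeft_apply]
  rw [hD, cyclicSum_tmul_tmul_sub]

lemma Dmap_single (a a' b b' c c' : K) (i : SVIx) :
    Dmap K a a' b b' c c' (Finsupp.single i 1) = dval K a a' b b' c c' i := by
  simp [Dmap]

lemma Dmap_neg_eq_wedgeLeft (a b c : K) :
    Dmap K a (-a) b (-b) c (-c) = wedgeLeft (Mb K 0) (derMap a b c) := by
  ext i : 2
  rcases i with n | n | n <;>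
    simp only [LinearMap.comp_apply, Finsupp.lsingle_apply, Dmap_single, dval, wedgeLeft_apply,
      derMap_single, derVal, TensorProduct.tmul_smul, ← TensorProduct.smul_tmul'] <;>
    module

end

/-- For skew parameters (`α† = -α`, `β† = -β`, `γ† = -γ`) the special derivation `D`
satisfies `(1+ξ+ξ²) ∘ (1 ⊗ D) ∘ D = 0`, has image in `Im(1-τ)`, and is compatible
with the bracket, so `(L, [·,·], D)` is a Lie bialgebra. -/
theorem sv_D_skew_gives_lieBialgebra :
    ∀ a b c : F,
      (∀ x : SVL F, cyclicSum F (LinearMap.lTensor (SVL F) (Dmap F a (-a) b (-b) c (-c))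
        (Dmap F a (-a) b (-b) c (-c) x)) = 0) ∧
      (∀ x : SVL F, Dmap F a (-a) b (-b) c (-c) x ∈ skewIm F) ∧
      IsDer F (Dmap F a (-a) b (-b) c (-c)) := by
  intro a b c
  rw [Dmap_neg_eq_wedgeLeft]
  exact ⟨cyclicSum_lTensor_wedgeLeft (derMap_Mb a b c 0), wedgeLeft_mem_skewIm _ _,
    isDer_wedgeLeft bk_Mb_zero_right (derMap_bk a b c)⟩
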